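/- Let p, n, k be positive integers with p ≥ 2, let S ⊆ {1,…,p} with |S| = k. Let L : ℝ^p → ℝ be differentiable and satisfy the (α,τ)-RSC condition with parameters α₁, α₂ > 0 and τ₁, τ₂ ≥ 0, and let ρ : ℝ → ℝ be μ-amenable with 0 ≤ μ < α₁; set q(t) := λ|t| − ρ(t), ρ(β) := Σ_{j=1}^p ρ(β_j), ∇q(β) := (q'(β_j))_{j=1}^p. Suppose β̂ ∈ ℝ^p satisfies supp(β̂) ⊆ S, ‖β̂‖₁ ≤ R, and ∇L(β̂) − ∇q(β̂) + λẑ = 0 for some ẑ ∈ ℝ^p with ẑ_S ∈ ∂‖β̂_S‖₁ and max_{j ∉ S}|ẑ_j| ≤ 1 − δ, where δ ∈ (0,1]. Suppose further that λ ≤ α₂/(8R), n ≥ (16R²τ₂²/α₂²) log p, λ ≥ 4Rτ₁ log p/(δn), and n ≥ (2τ₁/(α₁ − μ)) · (4/δ + 2)² · k log p. Then every stationary point β̃ of the program min_{‖β‖₁ ≤ R} {L(β) + ρ(β)} satisfies supp(β̃) ⊆ S. -/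

import Mathlib

open scoped BigOperators

/-- A function `ρ : ℝ → ℝ` is `μ`-amenable (with selection parameter `lam > 0`):
(i) symmetric around zero with `ρ 0 = 0`; (ii) nondecreasing on `[0, ∞)`;
(iii) `t ↦ ρ t / t` nonincreasing on `(0, ∞)`; (iv) differentiable away from `0`;
(v) `t ↦ ρ t + μ/2 t²` convex; (vi) `ρ'(t) → lam` as `t → 0⁺`. -/
structure Amenable (lam mu : ℝ) (ρ : ℝ → ℝ) : Prop where
  symm : ∀ t : ℝ, ρ (-t) = ρ t
  zero : ρ 0 = 0
  mono : MonotoneOn ρ (Set.Ici (0 : ℝ))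
  ratio : AntitoneOn (fun t => ρ t / t) (Set.Ioi (0 : ℝ))
  diff : ∀ t : ℝ, t ≠ 0 → DifferentiableAt ℝ ρ t
  conv : ConvexOn ℝ Set.univ (fun t => ρ t + mu / 2 * t ^ 2)
  deriv_lim : Filter.Tendsto (deriv ρ) (nhdsWithin 0 (Set.Ioi 0)) (nhds lam)


open scoped RealInnerProductSpace

/-- The ℓ₁-norm on `ℝ^p`. -/
noncomputable def norm1 {p : ℕ} (x : EuclideanSpace ℝ (Fin p)) : ℝ := ∑ j, |x j|

/-- The ℓ_∞-norm on `ℝ^p`. -/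
noncomputable def normInf {p : ℕ} (x : EuclideanSpace ℝ (Fin p)) : ℝ := ⨆ j, |x j|

/-- The subdifferential of the ℓ₁-norm at `x`: vectors `v` with `‖v‖_∞ ≤ 1` and
`⟨v, x⟩ = ‖x‖₁`. -/
def l1Subdiff {m : Type*} [Fintype m] (x : m → ℝ) : Set (m → ℝ) :=
  {v | (∀ j, |v j| ≤ 1) ∧ ∑ j, v j * x j = ∑ j, |x j|}

/-- The `(α, τ)`-RSC condition for a loss `L` with parameters `α₁, α₂, τ₁, τ₂` (and `n`, `p`). -/
def RSCCond (p n : ℕ) (α₁ α₂ τ₁ τ₂ : ℝ) (L : EuclideanSpace ℝ (Fin p) → ℝ) : Prop :=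
  ∀ β Δ : EuclideanSpace ℝ (Fin p),
    (‖Δ‖ ≤ 1 → α₁ * ‖Δ‖ ^ 2 - τ₁ * (Real.log p / n) * (norm1 Δ) ^ 2 ≤
      ⟪gradient L (β + Δ) - gradient L β, Δ⟫) ∧
    (1 ≤ ‖Δ‖ → α₂ * ‖Δ‖ - τ₂ * Real.sqrt (Real.log p / n) * norm1 Δ ≤
      ⟪gradient L (β + Δ) - gradient L β, Δ⟫)

/-- The derivative of `q(t) = λ|t| − ρ(t)`. -/
noncomputable def qDeriv (lam : ℝ) (ρ : ℝ → ℝ) (t : ℝ) : ℝ :=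
  deriv (fun u => lam * |u| - ρ u) t

/-- `βt` is a stationary point of the program `min_{‖β‖₁ ≤ R} L β + Σⱼ ρ(βⱼ)`:
`‖βt‖₁ ≤ R` and there is `z ∈ ∂‖βt‖₁` with
`⟨∇L(βt) − ∇q(βt) + λ z, β − βt⟩ ≥ 0` for all feasible `β`. -/
def IsStationaryPt {p : ℕ} (L : EuclideanSpace ℝ (Fin p) → ℝ) (ρ : ℝ → ℝ) (lam R : ℝ)
    (βt : EuclideanSpace ℝ (Fin p)) : Prop :=
  norm1 βt ≤ R ∧ ∃ z : Fin p → ℝ, z ∈ l1Subdiff (fun j => βt j) ∧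
    ∀ β : EuclideanSpace ℝ (Fin p), norm1 β ≤ R →
      0 ≤ ∑ j, (gradient L βt j - qDeriv lam ρ (βt j) + lam * z j) * (β j - βt j)

/-!
Write `Δ = β̃ - β̂`. Testing the stationarity of `β̃` against `β̂` and subtracting the
zero-subgradient equation of `β̂` bounds `⟪∇L(β̃) - ∇L(β̂), Δ⟫ + λ δ ‖Δ_{Sᶜ}‖₁` by
`⟪∇q(β̃) - ∇q(β̂), Δ⟫`, which `μ`-amenability bounds both by `μ ‖Δ‖₂²` and by `2 λ ‖Δ‖₁`.
With the upper bound on `λ`, the second RSC branch forces `‖Δ‖₂ ≤ 1`; the first branch then gives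
`(α₁ - μ) ‖Δ‖₂² + λ δ ‖Δ_{Sᶜ}‖₁ ≤ τ₁ (log p / n) ‖Δ‖₁²`. The lower bound on `λ` puts `Δ` in the
cone `‖Δ_{Sᶜ}‖₁ ≤ ‖Δ_S‖₁`, where `‖Δ‖₁² ≤ 4 k ‖Δ‖₂²`, and the sample size condition then leaves
no room for `‖Δ_{Sᶜ}‖₁ > 0`.
-/

open Filter Set Topology

theorem sum_mul_le_mul_sum_abs {ι : Type*} (s : Finset ι) {w x : ι → ℝ} {c : ℝ}
    (hw : ∀ j ∈ s, |w j| ≤ c) : ∑ j ∈ s, w j * x j ≤ c * ∑ j ∈ s, |x j| := by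
  rw [Finset.mul_sum]
  refine Finset.sum_le_sum fun j hj => (le_abs_self _).trans ?_
  rw [abs_mul]
  exact mul_le_mul_of_nonneg_right (hw j hj) (abs_nonneg _)

theorem EuclideanSpace.real_inner_eq_sum {ι : Type*} [Fintype ι] (x y : EuclideanSpace ℝ ι) :
    ⟪x, y⟫ = ∑ j, x j * y j := by
  simp [PiLp.inner_apply, mul_comm]

theorem norm1_nonneg {p : ℕ} (x : EuclideanSpace ℝ (Fin p)) : 0 ≤ norm1 x :=
  Finset.sum_nonneg fun j _ => abs_nonneg (x j)

theorem norm1_sub_le {p : ℕ} (x y : EuclideanSpace ℝ (Fin p)) :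
    norm1 (x - y) ≤ norm1 x + norm1 y := by
  rw [norm1, norm1, norm1, ← Finset.sum_add_distrib]
  exact Finset.sum_le_sum fun j _ => abs_sub _ _

namespace Amenable

variable {lam mu : ℝ} {ρ : ℝ → ℝ}

theorem continuous (hρ : Amenable lam mu ρ) : Continuous ρ := by
  have hconv : Continuous fun t : ℝ => ρ t + mu / 2 * t ^ 2 :=
    continuousOn_univ.mp (hρ.conv.continuousOn isOpen_univ)
  convert hconv.sub (show Continuous fun t : ℝ => mu / 2 * t ^ 2 by fun_prop) using 1
  ext t
  simp

theorem tendsto_div_nhdsGT (hρ : Amenable lam mu ρ) :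
    Tendsto (fun t => ρ t / t) (𝓝[>] 0) (𝓝 lam) := by
  refine deriv.lhopital_zero_nhdsGT ?_ (by simp) ?_ ?_ (by simpa using hρ.deriv_lim)
  · filter_upwards [self_mem_nhdsWithin] with t ht using hρ.diff t (ne_of_gt ht)
  · simpa [hρ.zero] using (hρ.continuous.tendsto 0).mono_left nhdsWithin_le_nhds
  · exact (continuous_id.tendsto 0).mono_left nhdsWithin_le_nhds

theorem div_le (hρ : Amenable lam mu ρ) {t : ℝ} (ht : 0 < t) : ρ t / t ≤ lam := by
  refine ge_of_tendsto hρ.tendsto_div_nhdsGT ?_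
  filter_upwards [Ioo_mem_nhdsGT ht] with s hs using hρ.ratio hs.1 ht hs.2.le

theorem tendsto_slope_nhdsGT (hρ : Amenable lam mu ρ) {t : ℝ} (ht : t ≠ 0) :
    Tendsto (slope ρ t) (𝓝[>] t) (𝓝 (deriv ρ t)) :=
  (hasDerivAt_iff_tendsto_slope_left_right.mp (hρ.diff t ht).hasDerivAt).2

theorem deriv_le_div (hρ : Amenable lam mu ρ) {t : ℝ} (ht : 0 < t) : deriv ρ t ≤ ρ t / t := by
  refine le_of_tendsto (hρ.tendsto_slope_nhdsGT ht.ne') ?_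
  filter_upwards [self_mem_nhdsWithin] with s (hs : t < s)
  have hratio : ρ s / s ≤ ρ t / t := hρ.ratio ht (ht.trans hs) hs.le
  rw [div_le_div_iff₀ (ht.trans hs) ht] at hratio
  rw [slope_def_field, div_le_div_iff₀ (sub_pos.mpr hs) ht]
  nlinarith

theorem deriv_nonneg (hρ : Amenable lam mu ρ) {t : ℝ} (ht : 0 < t) : 0 ≤ deriv ρ t := by
  refine ge_of_tendsto (hρ.tendsto_slope_nhdsGT ht.ne') ?_
  filter_upwards [self_mem_nhdsWithin] with s (hs : t < s)
  rw [slope_def_field]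
  exact div_nonneg (sub_nonneg.mpr (hρ.mono ht.le (ht.trans hs).le hs.le)) (sub_pos.mpr hs).le

theorem monotoneOn_deriv_add_mul (hρ : Amenable lam mu ρ) :
    MonotoneOn (fun t => deriv ρ t + mu * t) (Ioi 0) := by
  have hderiv : ∀ t ∈ Ioi (0 : ℝ), HasDerivAt (fun t => ρ t + mu / 2 * t ^ 2)
      (deriv ρ t + mu * t) t := fun t ht => by
    refine ((hρ.diff t (ne_of_gt ht)).hasDerivAt.fun_add
      ((hasDerivAt_pow 2 t).const_mul (mu / 2))).congr_deriv ?_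
    simp only [Nat.cast_ofNat, pow_one, Nat.add_one_sub_one]
    ring
  refine ((hρ.conv.subset (subset_univ _) (convex_Ioi 0)).monotoneOn_deriv
    fun t ht => (hderiv t ht).differentiableAt).congr fun t ht => (hderiv t ht).deriv

theorem le_deriv_add_mul (hρ : Amenable lam mu ρ) {t : ℝ} (ht : 0 < t) :
    lam ≤ deriv ρ t + mu * t := by
  have hlim : Tendsto (fun s => deriv ρ s + mu * s) (𝓝[>] 0) (𝓝 lam) := by
    simpa using hρ.deriv_lim.add ((continuous_const.mul continuous_id).tendsto' 0 0 (by simp)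
      |>.mono_left nhdsWithin_le_nhds)
  refine le_of_tendsto hlim ?_
  filter_upwards [Ioo_mem_nhdsGT ht] with s hs
  exact hρ.monotoneOn_deriv_add_mul hs.1 ht hs.2.le

theorem qDeriv_of_pos (hρ : Amenable lam mu ρ) {t : ℝ} (ht : 0 < t) :
    qDeriv lam ρ t = lam - deriv ρ t := by
  have h := ((hasDerivAt_abs_pos ht).const_mul lam).fun_sub (hρ.diff t ht.ne').hasDerivAt
  rw [qDeriv, h.deriv, mul_one]

theorem qDeriv_neg (hρ : Amenable lam mu ρ) (t : ℝ) : qDeriv lam ρ (-t) = -qDeriv lam ρ t := by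
  have h := deriv_comp_neg (fun u => lam * |u| - ρ u) (-t)
  simp only [neg_neg, abs_neg, hρ.symm] at h
  exact h

theorem qDeriv_zero (hρ : Amenable lam mu ρ) : qDeriv lam ρ 0 = 0 := by
  have h := hρ.qDeriv_neg 0
  rw [neg_zero] at h
  linarith

theorem qDeriv_mem_Icc (hρ : Amenable lam mu ρ) {t : ℝ} (ht : 0 < t) :
    qDeriv lam ρ t ∈ Icc 0 lam := by
  rw [hρ.qDeriv_of_pos ht]
  constructor
  · linarith [(hρ.deriv_le_div ht).trans (hρ.div_le ht)]
  · linarith [hρ.deriv_nonneg ht]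

theorem abs_qDeriv_le (hρ : Amenable lam mu ρ) (t : ℝ) : |qDeriv lam ρ t| ≤ lam := by
  have hpos : ∀ s, 0 < s → |qDeriv lam ρ s| ≤ lam := fun s hs => by
    obtain ⟨h0, hlam⟩ := hρ.qDeriv_mem_Icc hs
    rwa [abs_of_nonneg h0]
  rcases lt_trichotomy t 0 with ht | rfl | ht
  · simpa [hρ.qDeriv_neg] using hpos (-t) (neg_pos.mpr ht)
  · simpa [hρ.qDeriv_zero] using (hρ.qDeriv_mem_Icc one_pos).1.trans (hρ.qDeriv_mem_Icc one_pos).2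
  · exact hpos t ht

theorem monotone_mul_sub_qDeriv (hρ : Amenable lam mu ρ) :
    Monotone fun t => mu * t - qDeriv lam ρ t := by
  refine monotone_of_odd_of_monotoneOn_nonneg (fun t => by rw [hρ.qDeriv_neg]; ring) ?_
  intro a ha b hb hab
  rcases (mem_Ici.mp ha).eq_or_lt with rfl | ha'
  · rcases (mem_Ici.mp hb).eq_or_lt with rfl | hb'
    · rfl
    · simp only [mul_zero, hρ.qDeriv_zero, hρ.qDeriv_of_pos hb']
      linarith [hρ.le_deriv_add_mul hb']
  · simp only [hρ.qDeriv_of_pos ha', hρ.qDeriv_of_pos (ha'.trans_le hab)]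
    linarith [hρ.monotoneOn_deriv_add_mul ha' (ha'.trans_le hab) hab]

theorem qDeriv_sub_mul_sub_le (hρ : Amenable lam mu ρ) (a b : ℝ) :
    (qDeriv lam ρ a - qDeriv lam ρ b) * (a - b) ≤ mu * (a - b) ^ 2 := by
  have := (hρ.monotone_mul_sub_qDeriv.monovary monotone_id).sub_mul_sub_nonneg b a
  simp only [id] at this
  nlinarith

theorem sum_qDeriv_sub_mul_le_mul_sum_sq (hρ : Amenable lam mu ρ) {ι : Type*} [Fintype ι]
    (x y : ι → ℝ) :
    ∑ j, (qDeriv lam ρ (x j) - qDeriv lam ρ (y j)) * (x j - y j) ≤ mu * ∑ j, (x j - y j) ^ 2 := by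
  rw [Finset.mul_sum]
  exact Finset.sum_le_sum fun j _ => hρ.qDeriv_sub_mul_sub_le (x j) (y j)

theorem sum_qDeriv_sub_mul_le_mul_norm1 (hρ : Amenable lam mu ρ) {p : ℕ}
    (x y : EuclideanSpace ℝ (Fin p)) :
    ∑ j, (qDeriv lam ρ (x j) - qDeriv lam ρ (y j)) * (x j - y j) ≤ 2 * lam * norm1 (x - y) :=
  sum_mul_le_mul_sum_abs _ fun j _ => (abs_sub _ _).trans
    (by linarith [hρ.abs_qDeriv_le (x j), hρ.abs_qDeriv_le (y j)])

end Amenable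

theorem sum_mul_eq_sum_abs_of_mem_l1Subdiff {ι : Type*} [Fintype ι] {S : Finset ι}
    {w y : ι → ℝ} (hy : ∀ j, y j ≠ 0 → j ∈ S)
    (h : (fun j : S => w j) ∈ l1Subdiff (fun j : S => y j)) :
    ∑ j, w j * y j = ∑ j, |y j| := by
  have hoff : ∀ j ∉ S, y j = 0 := fun j hj => by_contra fun h => hj (hy j h)
  rw [← Finset.sum_subset (Finset.subset_univ S) fun j _ hj => by simp [hoff j hj],
    ← Finset.sum_subset (Finset.subset_univ S) fun j _ hj => by simp [hoff j hj],
    ← Finset.sum_coe_sort S, ← Finset.sum_coe_sort S]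
  exact h.2

theorem mul_sum_abs_compl_le_of_mem_l1Subdiff {ι : Type*} [Fintype ι] [DecidableEq ι]
    {S : Finset ι} {x y z w : ι → ℝ} {δ : ℝ} (hz : z ∈ l1Subdiff x)
    (hwS : ∀ j ∈ S, |w j| ≤ 1) (hwSc : ∀ j ∉ S, |w j| ≤ 1 - δ)
    (hwy : ∑ j, w j * y j = ∑ j, |y j|) :
    δ * ∑ j ∈ Sᶜ, |x j| ≤ ∑ j, (z j - w j) * (x j - y j) := by
  have hzy : ∑ j, z j * y j ≤ ∑ j, |y j| := by
    simpa using sum_mul_le_mul_sum_abs Finset.univ fun j _ => hz.1 j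
  have hwx : ∑ j, w j * x j ≤ ∑ j ∈ S, |x j| + (1 - δ) * ∑ j ∈ Sᶜ, |x j| := by
    rw [← Finset.sum_add_sum_compl S]
    have hS := sum_mul_le_mul_sum_abs S (x := x) hwS
    have hSc := sum_mul_le_mul_sum_abs Sᶜ (x := x) fun j hj => hwSc j (Finset.mem_compl.mp hj)
    linarith
  have hsplit := Finset.sum_add_sum_compl S fun j => |x j|
  have hexpand : ∑ j, (z j - w j) * (x j - y j)
      = ∑ j, z j * x j - ∑ j, z j * y j - ∑ j, w j * x j + ∑ j, w j * y j := by
    simp only [← Finset.sum_sub_distrib, ← Finset.sum_add_distrib]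
    exact Finset.sum_congr rfl fun j _ => by ring
  rw [hexpand, hz.2]
  linarith

theorem inner_sub_add_le_of_stationary {p : ℕ} {q : ℝ → ℝ} {lam : ℝ}
    {x y gx gy : EuclideanSpace ℝ (Fin p)} {z w : Fin p → ℝ}
    (hx : 0 ≤ ∑ j, (gx j - q (x j) + lam * z j) * (y j - x j))
    (hy : ∀ j, gy j - q (y j) + lam * w j = 0) :
    ⟪gx - gy, x - y⟫ + lam * ∑ j, (z j - w j) * (x j - y j)
      ≤ ∑ j, (q (x j) - q (y j)) * (x j - y j) := by
  suffices hsum : ⟪gx - gy, x - y⟫ + lam * ∑ j, (z j - w j) * (x j - y j)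
      - ∑ j, (q (x j) - q (y j)) * (x j - y j)
      = -∑ j, (gx j - q (x j) + lam * z j) * (y j - x j) by linarith
  rw [EuclideanSpace.real_inner_eq_sum, Finset.mul_sum, ← Finset.sum_add_distrib,
    ← Finset.sum_sub_distrib, ← Finset.sum_neg_distrib]
  refine Finset.sum_congr rfl fun j _ => ?_
  simp only [PiLp.sub_apply]
  linear_combination (y j - x j) * hy j

theorem IsStationaryPt.inner_add_mul_sum_abs_compl_le {p : ℕ} {L : EuclideanSpace ℝ (Fin p) → ℝ}
    {ρ : ℝ → ℝ} {lam R δ : ℝ} {S : Finset (Fin p)} {βt βhat : EuclideanSpace ℝ (Fin p)}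
    {zhat : Fin p → ℝ} (hβt : IsStationaryPt L ρ lam R βt) (hlam : 0 ≤ lam)
    (hβhatS : ∀ j, βhat j ≠ 0 → j ∈ S) (hβhat1 : norm1 βhat ≤ R)
    (hzero : ∀ j, gradient L βhat j - qDeriv lam ρ (βhat j) + lam * zhat j = 0)
    (hzS : (fun j : S => zhat j) ∈ l1Subdiff (fun j : S => βhat j))
    (hdual : ∀ j ∉ S, |zhat j| ≤ 1 - δ) :
    ⟪gradient L βt - gradient L βhat, βt - βhat⟫ + lam * δ * ∑ j ∈ Sᶜ, |βt j - βhat j|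
      ≤ ∑ j, (qDeriv lam ρ (βt j) - qDeriv lam ρ (βhat j)) * (βt j - βhat j) := by
  obtain ⟨-, z, hz, hstat⟩ := hβt
  have hcert := mul_sum_abs_compl_le_of_mem_l1Subdiff hz (fun j hj => hzS.1 ⟨j, hj⟩) hdual
    (sum_mul_eq_sum_abs_of_mem_l1Subdiff hβhatS hzS)
  have hcompl : ∑ j ∈ Sᶜ, |βt j - βhat j| = ∑ j ∈ Sᶜ, |βt j| :=
    Finset.sum_congr rfl fun j hj => by
      rw [not_imp_comm.mp (hβhatS j) (Finset.mem_compl.mp hj), sub_zero]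
  rw [mul_assoc, hcompl]
  linarith [inner_sub_add_le_of_stationary (hstat βhat hβhat1) hzero,
    mul_le_mul_of_nonneg_left hcert hlam]

theorem eq_zero_of_notMem_of_curvature {ι : Type*} [Fintype ι] [DecidableEq ι] (S : Finset ι)
    (x : ι → ℝ) {κ b t : ℝ} (hb : 0 < b) (ht : 0 ≤ t)
    (hN : 2 * t * ∑ j, |x j| ≤ b) (hκ : 8 * S.card * t ≤ κ)
    (h : κ * ∑ j, x j ^ 2 + b * ∑ j ∈ Sᶜ, |x j| ≤ t * (∑ j, |x j|) ^ 2) :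
    ∀ j ∉ S, x j = 0 := by
  set s := ∑ j ∈ S, |x j|
  set E := ∑ j ∈ Sᶜ, |x j|
  set a := ∑ j, x j ^ 2
  have hsplit : ∑ j, |x j| = s + E := (Finset.sum_add_sum_compl S _).symm
  have hs : 0 ≤ s := Finset.sum_nonneg fun j _ => abs_nonneg _
  have hE : 0 ≤ E := Finset.sum_nonneg fun j _ => abs_nonneg _
  have ha : 0 ≤ a := Finset.sum_nonneg fun j _ => sq_nonneg _
  have hκ0 : 0 ≤ κ := le_trans (by positivity) hκ
  have hCS : s ^ 2 ≤ S.card * a := by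
    refine (sq_sum_le_card_mul_sum_sq).trans (mul_le_mul_of_nonneg_left ?_ (by positivity))
    simp only [sq_abs]
    exact Finset.sum_le_sum_of_subset_of_nonneg (Finset.subset_univ S) fun j _ _ => sq_nonneg _
  rw [hsplit] at hN h
  have hquad : t * (s + E) ^ 2 ≤ b / 2 * (s + E) := by nlinarith
  have hcone : E ≤ s := by nlinarith [mul_nonneg hκ0 ha]
  have hmass : t * (s + E) ^ 2 ≤ κ / 2 * a :=
    calc t * (s + E) ^ 2 ≤ t * (4 * s ^ 2) :=
          mul_le_mul_of_nonneg_left (by nlinarith) ht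
      _ ≤ t * (4 * (S.card * a)) := by gcongr
      _ = (8 * S.card * t) / 2 * a := by ring
      _ ≤ κ / 2 * a := by gcongr
  have hE0 : E = 0 := le_antisymm (by nlinarith [mul_nonneg hκ0 ha]) hE
  intro j hj
  exact abs_eq_zero.mp ((Finset.sum_eq_zero_iff_of_nonneg fun j _ => abs_nonneg (x j)).mp hE0 j
    (Finset.mem_compl.mpr hj))

theorem RSCCond.norm_le_one {p n : ℕ} {α₁ α₂ τ₁ τ₂ lam : ℝ} {L : EuclideanSpace ℝ (Fin p) → ℝ}
    (hRSC : RSCCond p n α₁ α₂ τ₁ τ₂ L) (hα₂ : 0 < α₂) {β Δ : EuclideanSpace ℝ (Fin p)}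
    (hinner : ⟪gradient L (β + Δ) - gradient L β, Δ⟫ ≤ lam * norm1 Δ)
    (hsmall : (τ₂ * √(Real.log p / n) + lam) * norm1 Δ ≤ α₂) : ‖Δ‖ ≤ 1 := by
  by_contra! hΔ
  have := (hRSC β Δ).2 hΔ.le
  nlinarith

section Parameters

variable {p n : ℕ} {R τ : ℝ}

theorem mul_sqrt_log_div_le {α : ℝ} (hα : 0 < α) (hτ : 0 ≤ τ) (hR : 0 ≤ R)
    (h : 16 * R ^ 2 * τ ^ 2 / α ^ 2 * Real.log p ≤ n) :
    τ * √(Real.log p / n) * (4 * R) ≤ α := by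
  have hc : 0 ≤ Real.log p / n := by positivity
  rw [← pow_le_pow_iff_left₀ (by positivity) hα.le two_ne_zero]
  calc (τ * √(Real.log p / n) * (4 * R)) ^ 2
      = α ^ 2 * (16 * R ^ 2 * τ ^ 2 / α ^ 2 * Real.log p / n) := by
        rw [mul_pow, mul_pow, Real.sq_sqrt hc]
        field_simp
        ring
    _ ≤ α ^ 2 * 1 := by gcongr; exact div_le_one_of_le₀ h n.cast_nonneg
    _ = α ^ 2 := mul_one _

theorem mul_log_div_mul_le {δ lam : ℝ} (hδ : 0 < δ)
    (h : 4 * R * τ * Real.log p / (δ * n) ≤ lam) :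
    τ * (Real.log p / n) * (4 * R) ≤ lam * δ :=
  calc τ * (Real.log p / n) * (4 * R) = δ * (4 * R * τ * Real.log p / (δ * n)) := by
        rw [← mul_div_assoc δ, mul_div_mul_left _ _ hδ.ne']
        ring
    _ ≤ lam * δ := by rw [mul_comm lam]; gcongr

theorem mul_log_div_le {k : ℕ} {κ δ : ℝ} (hκ : 0 < κ) (hδ : 0 < δ) (hτ : 0 ≤ τ)
    (h : 2 * τ / κ * (4 / δ + 2) ^ 2 * (k * Real.log p) ≤ n) :
    8 * k * (τ * (Real.log p / n)) ≤ κ := by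
  have hfour : 4 ≤ (4 / δ + 2) ^ 2 := by nlinarith [div_pos four_pos hδ]
  calc 8 * k * (τ * (Real.log p / n)) = 4 * (2 * τ * (k * Real.log p)) / n := by ring
    _ ≤ (4 / δ + 2) ^ 2 * (2 * τ * (k * Real.log p)) / n := by gcongr
    _ = κ * (2 * τ / κ * (4 / δ + 2) ^ 2 * (k * Real.log p) / n) := by
        field_simp
    _ ≤ κ * 1 := by gcongr; exact div_le_one_of_le₀ h n.cast_nonneg
    _ = κ := mul_one _

end Parameters

theorem stationary_points_supported_general (p n k : ℕ)
    (S : Finset (Fin p)) (hS : S.card = k)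
    (L : EuclideanSpace ℝ (Fin p) → ℝ)
    (α₁ α₂ τ₁ τ₂ : ℝ) (hα₂ : 0 < α₂) (hτ₁ : 0 ≤ τ₁) (hτ₂ : 0 ≤ τ₂)
    (hRSC : RSCCond p n α₁ α₂ τ₁ τ₂ L)
    (ρ : ℝ → ℝ) (lam mu R δ : ℝ) (hlam : 0 < lam)
    (hmuα : mu < α₁) (hρ : Amenable lam mu ρ)
    (βhat : EuclideanSpace ℝ (Fin p)) (hβhatS : ∀ j, βhat j ≠ 0 → j ∈ S)
    (hβhat1 : norm1 βhat ≤ R)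
    (zhat : Fin p → ℝ)
    (hzero : ∀ j, gradient L βhat j - qDeriv lam ρ (βhat j) + lam * zhat j = 0)
    (hzS : (fun j : {j // j ∈ S} => zhat j) ∈ l1Subdiff (fun j : {j // j ∈ S} => βhat j))
    (hδ : 0 < δ)
    (hdual : ∀ j ∉ S, |zhat j| ≤ 1 - δ)
    (hlam_ub : lam ≤ α₂ / (8 * R))
    (hsample₁ : 16 * R ^ 2 * τ₂ ^ 2 / α₂ ^ 2 * Real.log p ≤ n)
    (hlam_lb : 4 * R * τ₁ * Real.log p / (δ * n) ≤ lam)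
    (hsample₂ : 2 * τ₁ / (α₁ - mu) * (4 / δ + 2) ^ 2 * (k * Real.log p) ≤ n) :
    ∀ βt : EuclideanSpace ℝ (Fin p), IsStationaryPt L ρ lam R βt →
      ∀ j, βt j ≠ 0 → j ∈ S := by
  intro βt hβt j hj
  by_contra hjS
  have hR : 0 < R := (norm1_nonneg βhat |>.trans hβhat1).lt_of_ne <| by
    rintro rfl; simp at hlam_ub; linarith
  have hΔ1 : norm1 (βt - βhat) ≤ 2 * R := by linarith [norm1_sub_le βt βhat, hβt.1]
  have hbasic := hβt.inner_add_mul_sum_abs_compl_le hlam.le hβhatS hβhat1 hzero hzS hdual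
  have hmass : 0 ≤ lam * δ * ∑ j ∈ Sᶜ, |βt j - βhat j| := by positivity
  have hΔ : ‖βt - βhat‖ ≤ 1 := by
    refine hRSC.norm_le_one (β := βhat) (lam := 2 * lam) hα₂ ?_ ?_
    · rw [add_sub_cancel]
      linarith [hρ.sum_qDeriv_sub_mul_le_mul_norm1 βt βhat]
    · have := mul_le_mul_of_nonneg_left hΔ1
        (by positivity : 0 ≤ τ₂ * √(Real.log p / n) + 2 * lam)
      linarith [mul_sqrt_log_div_le hα₂ hτ₂ hR.le hsample₁,
        (le_div_iff₀ (by positivity)).mp hlam_ub]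
  have hcurv := (hRSC βhat (βt - βhat)).1 hΔ
  rw [add_sub_cancel, EuclideanSpace.real_norm_sq_eq] at hcurv
  simp only [norm1, PiLp.sub_apply] at hΔ1 hcurv
  have hcone : 2 * (τ₁ * (Real.log p / n)) * ∑ j, |βt j - βhat j| ≤ lam * δ := by
    have := mul_le_mul_of_nonneg_left hΔ1 (by positivity : 0 ≤ 2 * (τ₁ * (Real.log p / n)))
    linarith [mul_log_div_mul_le hδ hlam_lb]
  have hsparse : 8 * S.card * (τ₁ * (Real.log p / n)) ≤ α₁ - mu :=
    hS ▸ mul_log_div_le (sub_pos.mpr hmuα) hδ hτ₁ hsample₂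
  have hzero_off := eq_zero_of_notMem_of_curvature S (fun j => βt j - βhat j)
    (mul_pos hlam hδ) (by positivity) hcone hsparse
    (by linarith [hρ.sum_qDeriv_sub_mul_le_mul_sum_sq βt βhat]) j hjS
  simp only [not_imp_comm.mp (hβhatS j) hjS, sub_zero] at hzero_off
  exact hj hzero_off

/-- Lemma on stationary points: under the RSC condition, `μ`-amenability, the
zero-subgradient condition for `β̂` supported on `S` with strict dual feasibility
`max_{j ∉ S} |ẑⱼ| ≤ 1 − δ`, and the stated conditions on `λ, n`, every stationary point `β̃`
of `min_{‖β‖₁ ≤ R} {L β + Σⱼ ρ(βⱼ)}` is supported on `S`. -/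
theorem stationary_points_supported (p n k : ℕ) (hp : 2 ≤ p) (hn : 0 < n) (hk : 0 < k)
    (S : Finset (Fin p)) (hS : S.card = k)
    (L : EuclideanSpace ℝ (Fin p) → ℝ) (hL : Differentiable ℝ L)
    (α₁ α₂ τ₁ τ₂ : ℝ) (hα₁ : 0 < α₁) (hα₂ : 0 < α₂) (hτ₁ : 0 ≤ τ₁) (hτ₂ : 0 ≤ τ₂)
    (hRSC : RSCCond p n α₁ α₂ τ₁ τ₂ L)
    (ρ : ℝ → ℝ) (lam mu R δ : ℝ) (hlam : 0 < lam)
    (hmu : 0 ≤ mu) (hmuα : mu < α₁) (hρ : Amenable lam mu ρ)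
    (βhat : EuclideanSpace ℝ (Fin p)) (hβhatS : ∀ j, βhat j ≠ 0 → j ∈ S)
    (hβhat1 : norm1 βhat ≤ R)
    (zhat : Fin p → ℝ)
    (hzero : ∀ j, gradient L βhat j - qDeriv lam ρ (βhat j) + lam * zhat j = 0)
    (hzS : (fun j : {j // j ∈ S} => zhat j) ∈ l1Subdiff (fun j : {j // j ∈ S} => βhat j))
    (hδ : 0 < δ) (hδ_ub : δ ≤ 1)
    (hdual : ∀ j ∉ S, |zhat j| ≤ 1 - δ)
    (hlam_ub : lam ≤ α₂ / (8 * R))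
    (hsample₁ : 16 * R ^ 2 * τ₂ ^ 2 / α₂ ^ 2 * Real.log p ≤ n)
    (hlam_lb : 4 * R * τ₁ * Real.log p / (δ * n) ≤ lam)
    (hsample₂ : 2 * τ₁ / (α₁ - mu) * (4 / δ + 2) ^ 2 * (k * Real.log p) ≤ n) :
    ∀ βt : EuclideanSpace ℝ (Fin p), IsStationaryPt L ρ lam R βt →
      ∀ j, βt j ≠ 0 → j ∈ S :=
  stationary_points_supported_general p n k S hS L α₁ α₂ τ₁ τ₂ hα₂ hτ₁ hτ₂ hRSC ρ lam mu R δ hlam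
    hmuα hρ βhat hβhatS hβhat1 zhat hzero hzS hδ hdual hlam_ub hsample₁ hlam_lb hsample₂
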